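/- Let G be an m-free digraph, m ≥ 4, and suppose that for every vertex u in some directed cycle of G, u has both an out-neighbor and an in-neighbor. For v ∈ V(G) and 1 ≤ k ≤ m−3, set V₂ = V(G) ∖ ⋃_{i=1}^{k+1} N⁻_i(v). Then every arc from V₂ to ⋃_{i=1}^{k+1} N⁻_i(v) has tail in N⁻_{k+2}(v) and head in N⁻_{k+1}(v). -/

import Mathlib

/-- A simple digraph: no loops, no parallel arcs (antiparallel arcs allowed). -/
structure SimpleDigraph (V : Type*) where
  Adj : V → V → Prop
  irrefl : ∀ v, ¬ Adj v v

namespace SimpleDigraph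

variable {V : Type*}

/-- There is a directed walk from `u` to `w` with exactly `k` arcs. -/
def HasWalk (G : SimpleDigraph V) (u w : V) (k : ℕ) : Prop :=
  ∃ p : ℕ → V, p 0 = u ∧ p k = w ∧ ∀ i < k, G.Adj (p i) (p (i + 1))

/-- The directed distance from `u` to `w` equals `k`. -/
def DistEq (G : SimpleDigraph V) (u w : V) (k : ℕ) : Prop :=
  G.HasWalk u w k ∧ ∀ j, G.HasWalk u w j → k ≤ j

/-- Vertices at directed distance exactly `i` from `v`. -/
def Nplus (G : SimpleDigraph V) (i : ℕ) (v : V) : Set V := {u | G.DistEq v u i}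

/-- Vertices whose directed distance to `v` is exactly `i`. -/
def Nminus (G : SimpleDigraph V) (i : ℕ) (v : V) : Set V := {u | G.DistEq u v i}

def arcSet (G : SimpleDigraph V) : Set (V × V) := {e | G.Adj e.1 e.2}

/-- The set of arcs from `A` to `B`. -/
def arcsBetween (G : SimpleDigraph V) (A B : Set V) : Set (V × V) :=
  {e | e.1 ∈ A ∧ e.2 ∈ B ∧ G.Adj e.1 e.2}

/-- `u` and `w` are nonadjacent: no arc in either direction. -/
def Nonadj (G : SimpleDigraph V) (u w : V) : Prop := ¬ G.Adj u w ∧ ¬ G.Adj w u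

/-- Missing (nonadjacent) unordered pairs with one endpoint in `A`, the other in `B`. -/
def missingPairs (G : SimpleDigraph V) (A B : Set V) : Set (Sym2 V) :=
  {p | ∃ a ∈ A, ∃ b ∈ B, p = s(a, b) ∧ a ≠ b ∧ G.Nonadj a b}

/-- A directed cycle, given as its list of (distinct) vertices. -/
def IsCycle (G : SimpleDigraph V) (l : List V) : Prop :=
  l ≠ [] ∧ l.Nodup ∧ l.Chain' G.Adj ∧
    ∃ a b, l.getLast? = some a ∧ l.head? = some b ∧ G.Adj a b

def Acyclic (G : SimpleDigraph V) : Prop := ∀ l : List V, ¬ G.IsCycle l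

/-- `G` is `m`-free: no directed cycle of length at most `m`. -/
def MFree (G : SimpleDigraph V) (m : ℕ) : Prop :=
  ∀ l : List V, G.IsCycle l → m < l.length

def deleteArcs (G : SimpleDigraph V) (X : Set (V × V)) : SimpleDigraph V :=
  ⟨fun a b => G.Adj a b ∧ (a, b) ∉ X, fun v h => G.irrefl v h.1⟩

/-- The induced subdigraph on a vertex set `A`. -/
def induce (G : SimpleDigraph V) (A : Set V) : SimpleDigraph A :=
  ⟨fun a b => G.Adj a b, fun a h => G.irrefl a h⟩

/-- Minimum size of a feedback arc set. -/
noncomputable def beta (G : SimpleDigraph V) : ℕ :=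
  sInf {n | ∃ X : Set (V × V), X ⊆ G.arcSet ∧ X.ncard = n ∧ (G.deleteArcs X).Acyclic}

/-- Number of unordered pairs of distinct nonadjacent vertices. -/
noncomputable def gamma (G : SimpleDigraph V) : ℕ :=
  {p : Sym2 V | ¬ p.IsDiag ∧ ∀ u w, p = s(u, w) → G.Nonadj u w}.ncard

/-- `l` is a shortest (hence induced) directed path of length `k`:
it has `k+1` distinct vertices, consecutive arcs, and the directed distance
between its endpoints equals `k`. -/
def IsShortestPath (G : SimpleDigraph V) (l : List V) (k : ℕ) : Prop :=
  l.length = k + 1 ∧ l.Nodup ∧ l.Chain' G.Adj ∧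
    ∃ a b, l.head? = some a ∧ l.getLast? = some b ∧ G.DistEq a b k

end SimpleDigraph

/-! The tail `a` of such an arc cannot be `v`: a shortest walk from the head `b` to `v` has
distinct vertices, so together with the arc `v → b` it would close a directed cycle of length
at most `k + 2 < m`. Hence `a` has a distance `d ≤ dist(b, v) + 1 ≤ k + 2` to `v` with `d ≥ 1`, and
`a ∉ ⋃ N⁻ᵢ(v)` forces `d = k + 2`, which in turn forces `dist(b, v) = k + 1`. -/

namespace SimpleDigraph

variable {V : Type*} {G : SimpleDigraph V}

lemma hasWalk_zero_iff {u w : V} : G.HasWalk u w 0 ↔ u = w :=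
  ⟨fun ⟨_, h0, h1, _⟩ => h0 ▸ h1, fun h => ⟨fun _ => u, rfl, h, by simp⟩⟩

lemma hasWalk_one_of_adj {u w : V} (h : G.Adj u w) : G.HasWalk u w 1 :=
  ⟨fun t => if t = 0 then u else w, rfl, rfl, fun i hi => by simpa [Nat.lt_one_iff.1 hi] using h⟩

lemma HasWalk.append {u w x : V} {i n : ℕ} (h₁ : G.HasWalk u w i) (h₂ : G.HasWalk w x n) :
    G.HasWalk u x (i + n) := by
  obtain ⟨p, hp0, hpi, hp⟩ := h₁
  obtain ⟨q, hq0, hqn, hq⟩ := h₂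
  refine ⟨fun t => if t ≤ i then p t else q (t - i), by simp [hp0], ?_, fun t ht => ?_⟩
  · rcases Nat.eq_zero_or_pos n with rfl | hn
    · simp [hpi, ← hq0, ← hqn]
    · simp [show ¬ i + n ≤ i by omega, hqn]
  · by_cases hti : t < i
    · simpa [hti.le, Nat.succ_le_of_lt hti] using hp t hti
    by_cases hteq : t = i
    · subst hteq
      simpa [hpi, ← hq0] using hq 0 (by omega)
    · simpa [show ¬ t ≤ i by omega, hti, show t + 1 - i = t - i + 1 by omega] using
        hq (t - i) (by omega)

lemma HasWalk.cons {u w x : V} {n : ℕ} (h : G.Adj u w) (hw : G.HasWalk w x n) :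
    G.HasWalk u x (n + 1) :=
  add_comm 1 n ▸ (hasWalk_one_of_adj h).append hw

lemma hasWalk_segment {p : ℕ → V} {n : ℕ} (hp : ∀ t < n, G.Adj (p t) (p (t + 1)))
    {i i' : ℕ} (hii' : i ≤ i') (hi' : i' ≤ n) : G.HasWalk (p i) (p i') (i' - i) :=
  ⟨fun t => p (i + t), rfl, by simp only [Nat.add_sub_cancel' hii'],
    fun t ht => by simpa [add_assoc] using hp (i + t) (by omega)⟩

lemma exists_distEq_le_of_hasWalk {u w : V} {n : ℕ} (h : G.HasWalk u w n) :
    ∃ d ≤ n, G.DistEq u w d := by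
  classical
  have hex : ∃ d, G.HasWalk u w d := ⟨n, h⟩
  exact ⟨Nat.find hex, Nat.find_min' hex h, Nat.find_spec hex, fun _ => Nat.find_min' hex⟩

/-- A walk realising the distance visits no vertex twice: a repetition could be cut out. -/
lemma DistEq.injOn_walk {u w : V} {n : ℕ} (hd : G.DistEq u w n) {p : ℕ → V}
    (hp0 : p 0 = u) (hpn : p n = w) (hp : ∀ t < n, G.Adj (p t) (p (t + 1))) :
    Set.InjOn p (Set.Iic n) := by
  suffices ∀ i i', i < i' → i' ≤ n → p i ≠ p i' by
    intro i hi i' hi' heq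
    by_contra hne
    rcases Nat.lt_or_gt_of_ne hne with h | h
    · exact this i i' h hi' heq
    · exact this i' i h hi heq.symm
  intro i i' hii' hi' heq
  have hshort : G.HasWalk u w (i - 0 + (n - i')) := by
    rw [← hp0, ← hpn]
    refine (hasWalk_segment hp (Nat.zero_le i) (by omega)).append ?_
    rw [heq]
    exact hasWalk_segment hp hi' le_rfl
  have := hd.2 _ hshort
  omega

lemma DistEq.exists_isCycle_of_adj {b v : V} {j : ℕ} (hd : G.DistEq b v j) (hvb : G.Adj v b) :
    ∃ l, G.IsCycle l ∧ l.length = j + 1 := by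
  obtain ⟨p, hp0, hpj, hp⟩ := hd.1
  have hinj := hd.injOn_walk hp0 hpj hp
  refine ⟨List.ofFn fun t : Fin (j + 1) => p t, ⟨by simp, ?_, ?_, p j, p 0, ?_, ?_, ?_⟩, by simp⟩
  · exact List.nodup_ofFn.2 fun x y hxy =>
      Fin.ext (hinj (Nat.lt_succ_iff.1 x.2) (Nat.lt_succ_iff.1 y.2) hxy)
  · exact List.isChain_ofFn.2 fun t ht => hp t (by omega)
  · rw [List.getLast?_eq_some_getLast (by simp), List.getLast_ofFn]
    rfl
  · simp
  · rwa [hp0, hpj]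

lemma MFree.lt_succ_of_distEq_of_adj {m : ℕ} (hG : G.MFree m) {b v : V} {j : ℕ}
    (hd : G.DistEq b v j) (hvb : G.Adj v b) : m < j + 1 := by
  obtain ⟨l, hl, hlen⟩ := hd.exists_isCycle_of_adj hvb
  exact hlen ▸ hG l hl

end SimpleDigraph

theorem stmt17_general {V : Type*} (G : SimpleDigraph V) (m k : ℕ)
    (hm : 4 ≤ m) (hG : G.MFree m)
    (v : V) (hk2 : k ≤ m - 3) :
    ∀ a b : V, a ∈ (⋃ i ∈ Set.Icc 1 (k + 1), G.Nminus i v)ᶜ →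
      b ∈ ⋃ i ∈ Set.Icc 1 (k + 1), G.Nminus i v → G.Adj a b →
      a ∈ G.Nminus (k + 2) v ∧ b ∈ G.Nminus (k + 1) v := by
  intro a b ha hb hab
  simp only [Set.mem_compl_iff, Set.mem_iUnion, Set.mem_Icc, not_exists] at ha hb
  obtain ⟨j, ⟨hj1, hjk⟩, hbj⟩ := hb
  have hav : a ≠ v := by
    rintro rfl
    have := hG.lt_succ_of_distEq_of_adj hbj hab
    omega
  obtain ⟨d, hdj, had⟩ := SimpleDigraph.exists_distEq_le_of_hasWalk (hbj.1.cons hab)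
  have hd0 : d ≠ 0 := by
    rintro rfl
    exact hav (SimpleDigraph.hasWalk_zero_iff.1 had.1)
  have hdk : ¬ d ≤ k + 1 := fun h => ha d ⟨by omega, h⟩ had
  obtain rfl : d = k + 2 := by omega
  obtain rfl : j = k + 1 := by omega
  exact ⟨had, hbj⟩

theorem stmt17 {V : Type*} (G : SimpleDigraph V) (m k : ℕ)
    (hm : 4 ≤ m) (hG : G.MFree m)
    (hcyc : ∀ u : V, (∃ l : List V, G.IsCycle l ∧ u ∈ l) →
      (∃ w, G.Adj u w) ∧ (∃ w, G.Adj w u))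
    (v : V) (hk1 : 1 ≤ k) (hk2 : k ≤ m - 3) :
    ∀ a b : V, a ∈ (⋃ i ∈ Set.Icc 1 (k + 1), G.Nminus i v)ᶜ →
      b ∈ ⋃ i ∈ Set.Icc 1 (k + 1), G.Nminus i v → G.Adj a b →
      a ∈ G.Nminus (k + 2) v ∧ b ∈ G.Nminus (k + 1) v :=
  stmt17_general G m k hm hG v hk2
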